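/- arXiv:2406.15009 — 4 statements merged into one kernel-verified Lean document; each statement's English description precedes it below -/
import Mathlib

section
/- Suppose π* minimizes Goldilocks_1 over a convex set Π of feasible probability assignments, and suppose some π ∈ Π satisfies max(π) ≤ (k/n)·δ and min(π) ≥ (k/n)/δ for some δ ≥ 1. Then every entry of π* lies in the interval [(k/n)/(2δ), (k/n)·2δ]. -/
/-- If π* minimizes Goldilocks_1 over a feasible set S and some
π ∈ S satisfies max(π) ≤ (k/n)·δ and min(π) ≥ (k/n)/δ with δ ≥ 1, then every
entry of π* lies in [(k/n)/(2δ), (k/n)·2δ]. -/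
theorem stmt5 (n k : ℕ) [NeZero n] (hk : 0 < k)
    (S : Set (Fin n → ℝ)) (hS : ∀ π ∈ S, ∀ i, π i ∈ Set.Ioc (0 : ℝ) 1)
    (πs : Fin n → ℝ) (hmem : πs ∈ S)
    (hopt : ∀ π ∈ S,
      (n : ℝ) / k * (⨆ i, πs i) + ((k : ℝ) / n) / (⨅ i, πs i)
        ≤ (n : ℝ) / k * (⨆ i, π i) + ((k : ℝ) / n) / (⨅ i, π i))
    (δ : ℝ) (hδ : 1 ≤ δ)
    (π : Fin n → ℝ) (hπS : π ∈ S)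
    (hmax : (⨆ i, π i) ≤ (k : ℝ) / n * δ)
    (hmin : (k : ℝ) / n / δ ≤ ⨅ i, π i) :
    ∀ i, πs i ∈ Set.Icc ((k : ℝ) / n / (2 * δ)) ((k : ℝ) / n * (2 * δ)) := by
  have hn : (0 : ℝ) < n := by
    exact_mod_cast Nat.pos_of_ne_zero (NeZero.ne n)
  have hk' : (0 : ℝ) < k := by exact_mod_cast hk
  have hkn : (0 : ℝ) < (k : ℝ) / n := div_pos hk' hn
  have hnk : (0 : ℝ) < (n : ℝ) / k := div_pos hn hk'
  have hδ0 : (0 : ℝ) < δ := lt_of_lt_of_le one_pos hδ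
  have hne : Nonempty (Fin n) := Fin.pos_iff_nonempty.mp (Nat.pos_of_ne_zero (NeZero.ne n))
  have hbdd : BddAbove (Set.range πs) := (Set.finite_range πs).bddAbove
  have hbddb : BddBelow (Set.range πs) := (Set.finite_range πs).bddBelow
  -- positivity of inf of πs
  obtain ⟨j, hj⟩ := exists_eq_ciInf_of_finite (f := πs)
  have hm : 0 < ⨅ i, πs i := hj ▸ (hS πs hmem j).1
  have hM : 0 < ⨆ i, πs i := lt_of_lt_of_le (hS πs hmem j).1 (le_ciSup hbdd j)
  -- bound on Goldilocks of π
  have h1 : (n : ℝ) / k * (⨆ i, π i) ≤ δ := by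
    calc (n : ℝ) / k * (⨆ i, π i) ≤ (n : ℝ) / k * ((k : ℝ) / n * δ) := by
          exact mul_le_mul_of_nonneg_left hmax hnk.le
      _ = δ := by field_simp
  have hminpos : (0 : ℝ) < (k : ℝ) / n / δ := div_pos hkn hδ0
  have h2 : ((k : ℝ) / n) / (⨅ i, π i) ≤ δ := by
    calc ((k : ℝ) / n) / (⨅ i, π i) ≤ ((k : ℝ) / n) / ((k : ℝ) / n / δ) :=
          div_le_div_of_nonneg_left hkn.le hminpos hmin
      _ = δ := by field_simp
  have hG : (n : ℝ) / k * (⨆ i, πs i) + ((k : ℝ) / n) / (⨅ i, πs i) ≤ 2 * δ := by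
    have := hopt π hπS
    linarith
  have hterm1 : 0 < (n : ℝ) / k * (⨆ i, πs i) := mul_pos hnk hM
  have hterm2 : 0 < ((k : ℝ) / n) / (⨅ i, πs i) := div_pos hkn hm
  -- sup bound
  have hMle : (⨆ i, πs i) ≤ (k : ℝ) / n * (2 * δ) := by
    have h : (n : ℝ) / k * (⨆ i, πs i) ≤ 2 * δ := by linarith
    have := mul_le_mul_of_nonneg_left h hkn.le
    calc (⨆ i, πs i) = (k : ℝ) / n * ((n : ℝ) / k * (⨆ i, πs i)) := by
          field_simp
      _ ≤ (k : ℝ) / n * (2 * δ) := this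
  -- inf bound
  have hmge : (k : ℝ) / n / (2 * δ) ≤ ⨅ i, πs i := by
    have h : ((k : ℝ) / n) / (⨅ i, πs i) ≤ 2 * δ := by linarith
    rw [div_le_iff₀ hm] at h
    rw [div_le_iff₀ (by positivity)]
    linarith
  intro i
  exact ⟨le_trans hmge (ciInf_le hbddb i), le_trans (le_ciSup hbdd i) hMle⟩
end

section
/- Suppose π* minimizes Goldilocks_γ over a set Π and some π ∈ Π has min(π) = z and max(π) = M. If γ = z·M·(n/k)², then min(π*) ≥ z/2 and max(π*) ≤ 2M. -/
/-- If π* minimizes Goldilocks_γ over S where γ = z·M·(n/k)², and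
some π ∈ S has min(π) = z and max(π) = M, then min(π*) ≥ z/2 and max(π*) ≤ 2M. -/
theorem stmt6 (n k : ℕ) [NeZero n] (hk : 0 < k)
    (z M : ℝ) (hz : 0 < z) (hzM : z ≤ M) (hM : M ≤ 1)
    (S : Set (Fin n → ℝ)) (hS : ∀ π ∈ S, ∀ i, π i ∈ Set.Ioc (0 : ℝ) 1)
    (π πs : Fin n → ℝ) (hπ : π ∈ S)
    (hmin : (⨅ i, π i) = z) (hmax : (⨆ i, π i) = M)
    (hπs : πs ∈ S)
    (hopt : ∀ π' ∈ S,
      (n : ℝ) / k * (⨆ i, πs i)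
          + (z * M * ((n : ℝ) / k) ^ 2) * ((k : ℝ) / n) / (⨅ i, πs i)
        ≤ (n : ℝ) / k * (⨆ i, π' i)
          + (z * M * ((n : ℝ) / k) ^ 2) * ((k : ℝ) / n) / (⨅ i, π' i)) :
    z / 2 ≤ (⨅ i, πs i) ∧ (⨆ i, πs i) ≤ 2 * M := by
  have hn : 0 < (n:ℝ) := by
    have := Nat.pos_of_ne_zero (NeZero.ne n); exact_mod_cast this
  have hkR : 0 < (k:ℝ) := by exact_mod_cast hk
  obtain ⟨i0, hi0⟩ := exists_eq_ciInf_of_finite (f := πs)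
  set a := ⨅ i, πs i with ha
  set b := ⨆ i, πs i with hb
  have hapos : 0 < a := hi0 ▸ (hS πs hπs i0).1
  have hab : a ≤ b := by
    calc a = πs i0 := hi0.symm
      _ ≤ b := le_ciSup (Set.Finite.bddAbove (Set.finite_range πs)) i0
  have H := hopt π hπ
  rw [hmin, hmax] at H
  have e : (z * M * ((n:ℝ)/k)^2) * ((k:ℝ)/n) = z * M * ((n:ℝ)/k) := by
    field_simp
  rw [e] at H
  have hnk : (0:ℝ) < (n:ℝ)/k := by positivity
  have e2 : z * M * ((n:ℝ)/k) / z = M * ((n:ℝ)/k) := by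
    field_simp
  rw [e2] at H
  have H3 := mul_le_mul_of_nonneg_right H hapos.le
  rw [add_mul, div_mul_cancel₀ _ hapos.ne'] at H3
  have hMpos : 0 < M := lt_of_lt_of_le hz hzM
  have hbpos : 0 < b := lt_of_lt_of_le hapos hab
  constructor
  · nlinarith [mul_pos (mul_pos hnk hbpos) hapos, mul_pos hMpos hnk,
      mul_pos (mul_pos hMpos hnk) hapos]
  · nlinarith [mul_pos hnk hapos, mul_pos (mul_pos hz hMpos) hnk,
      mul_pos hMpos hnk]
end

section
/- In the linked-fate instance above, for any z ∈ (0, 1/n] and any realizable anonymous assignment π: if min(π) ≥ z then max(π) ≥ (n/2 − 1)·z. -/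
/-- In the linked-fate instance, for any z ∈ (0, 1/n] and any
realizable anonymous assignment π: if min(π) ≥ z then max(π) ≥ (n/2 − 1)·z. -/
theorem stmt10 (n k : ℕ) [NeZero n] (h4 : 4 ∣ n) (hk2 : 2 ∣ k) (hk : 0 < k)
    (f1 f2 : Fin n → Bool)
    (h00 : (Finset.univ.filter (fun i => f1 i = false ∧ f2 i = false)).card = n / 4)
    (h11 : (Finset.univ.filter (fun i => f1 i = true ∧ f2 i = true)).card = n / 4)
    (h10 : (Finset.univ.filter (fun i => f1 i = true ∧ f2 i = false)).card = n / 2 - 1)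
    (h01 : (Finset.univ.filter (fun i => f1 i = false ∧ f2 i = true)).card = 1)
    (d : Finset (Fin n) → ℝ) (hd0 : ∀ K, 0 ≤ d K)
    (hsupp : ∀ K, d K ≠ 0 → K.card = k ∧
      (K.filter (fun i => f1 i = false)).card = k / 2 ∧
      (K.filter (fun i => f2 i = false)).card = k / 2)
    (hsum : ∑ K : Finset (Fin n), d K = 1)
    (π : Fin n → ℝ)
    (hπ : ∀ i, π i = ∑ K : Finset (Fin n), if i ∈ K then d K else 0)
    (hanon : ∀ i j, f1 i = f1 j → f2 i = f2 j → π i = π j) :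
    ∀ z : ℝ, 0 < z → z ≤ 1 / (n : ℝ) →
      z ≤ (⨅ i, π i) → ((n : ℝ) / 2 - 1) * z ≤ ⨆ i, π i := by
  intro z hz _ hmin
  obtain ⟨m, rfl⟩ := h4
  have hm : 1 ≤ m := by
    rcases Nat.eq_zero_or_pos m with h | h
    · exfalso; exact (NeZero.ne (4 * m)) (by omega)
    · exact h
  set S01 := Finset.univ.filter (fun i => f1 i = false ∧ f2 i = true) with hS01
  set S10 := Finset.univ.filter (fun i => f1 i = true ∧ f2 i = false) with hS10
  -- pick the unique 01 agent and some 10 agent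
  obtain ⟨i0, hi0⟩ := Finset.card_eq_one.mp h01
  have hS10card : S10.card = 2 * m - 1 := by rw [hS10, h10]; omega
  have hS10ne : S10.Nonempty := by
    rw [← Finset.card_pos, hS10card]; omega
  obtain ⟨j0, hj0⟩ := hS10ne
  have hj0' : f1 j0 = true ∧ f2 j0 = false := by
    simpa [hS10] using hj0
  have hi0' : f1 i0 = false ∧ f2 i0 = true := by
    have : i0 ∈ S01 := by rw [hi0]; exact Finset.mem_singleton_self i0
    simpa [hS01] using this
  -- per-panel counts of 01 and 10 agents agree
  have hcards : ∀ K : Finset (Fin (4 * m)), d K ≠ 0 →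
      (K.filter (fun i => f1 i = false ∧ f2 i = true)).card
        = (K.filter (fun i => f1 i = true ∧ f2 i = false)).card := by
    intro K hK
    obtain ⟨_, hA, hB⟩ := hsupp K hK
    have e1 : (K.filter (fun i => f1 i = false ∧ f2 i = true)).card
        + (K.filter (fun i => f1 i = false ∧ f2 i = false)).card = k / 2 := by
      have := Finset.card_filter_add_card_filter_not
        (s := K.filter (fun i => f1 i = false)) (p := fun i => f2 i = true)
      rw [hA] at this
      simpa [Finset.filter_filter] using this
    have e2 : (K.filter (fun i => f2 i = false ∧ f1 i = false)).card
        + (K.filter (fun i => f2 i = false ∧ f1 i = true)).card = k / 2 := by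
      have := Finset.card_filter_add_card_filter_not
        (s := K.filter (fun i => f2 i = false)) (p := fun i => f1 i = false)
      rw [hB] at this
      simpa [Finset.filter_filter] using this
    have e3 : K.filter (fun i => f2 i = false ∧ f1 i = false)
        = K.filter (fun i => f1 i = false ∧ f2 i = false) := by
      apply Finset.filter_congr; intro i _; simp [and_comm]
    have e4 : K.filter (fun i => f2 i = false ∧ f1 i = true)
        = K.filter (fun i => f1 i = true ∧ f2 i = false) := by
      apply Finset.filter_congr; intro i _; simp [and_comm]
    rw [e3, e4] at e2
    omega
  -- sum of π over a type-set equals ∑_K dK * count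
  have hsumtype : ∀ (p : Fin (4 * m) → Prop) [DecidablePred p],
      ∑ i ∈ Finset.univ.filter p, π i
        = ∑ K : Finset (Fin (4 * m)), ((K.filter p).card : ℝ) * d K := by
    intro p _
    simp only [hπ]
    rw [Finset.sum_comm]
    apply Finset.sum_congr rfl
    intro K _
    rw [← Finset.sum_filter, Finset.sum_const, nsmul_eq_mul]
    have he : (Finset.univ.filter p).filter (fun i => i ∈ K) = K.filter p := by
      ext i; simp [and_comm]
    rw [he]
  have key : ∑ i ∈ S01, π i = ∑ j ∈ S10, π j := by
    rw [hS01, hS10, hsumtype, hsumtype]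
    apply Finset.sum_congr rfl
    intro K _
    by_cases hK : d K = 0
    · simp [hK]
    · rw [hcards K hK]
  -- evaluate both sides
  have hL : ∑ i ∈ S01, π i = π i0 := by rw [hi0, Finset.sum_singleton]
  have hR : ∑ j ∈ S10, π j = ((2 * m - 1 : ℕ) : ℝ) * π j0 := by
    rw [Finset.sum_congr rfl (fun j hj => ?_), Finset.sum_const, hS10card, nsmul_eq_mul]
    have hj' : f1 j = true ∧ f2 j = false := by simpa [hS10] using hj
    exact hanon j j0 (by rw [hj'.1, hj0'.1]) (by rw [hj'.2, hj0'.2])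
  have hkey : π i0 = ((2 * m - 1 : ℕ) : ℝ) * π j0 := by rw [← hL, key, hR]
  -- bounds from inf and sup
  have hinf : z ≤ π j0 := le_trans hmin (ciInf_le (Finite.bddBelow_range π) j0)
  have hsup : π i0 ≤ ⨆ i, π i := le_ciSup (Finite.bddAbove_range π) i0
  have hcast : ((4 * m : ℕ) : ℝ) / 2 - 1 = ((2 * m - 1 : ℕ) : ℝ) := by
    have : (2 * m - 1 : ℕ) = 2 * m - 1 := rfl
    push_cast [Nat.cast_sub (by omega : 1 ≤ 2 * m)]
    ring
  rw [hcast]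
  calc ((2 * m - 1 : ℕ) : ℝ) * z ≤ ((2 * m - 1 : ℕ) : ℝ) * π j0 := by
        apply mul_le_mul_of_nonneg_left hinf (by positivity)
    _ = π i0 := hkey.symm
    _ ≤ ⨆ i, π i := hsup
end

section
/- In the Leximin manipulation lower-bound instance, the maximin-optimal choice of d_2 (the probability mass on Type-2 panels) is d_2 = min{(k−2)(c−4)/(n − n_min + 2(c−4)), 1}: at this value the probabilities p_000 = p_110 = p_100 are equalized, increasing d_2 decreases p_000, and decreasing d_2 decreases p_100, so this d_2 maximizes the minimum of {p_000, p_100, p_010}. -/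
/-!
`p_000` is decreasing and `p_100` increasing in `d_2`, and `p_010 ≥ p_100` on `[0, 1]`, so the
minimum of the three is the minimum of a decreasing and an increasing function. Such a minimum is
maximal where the two functions cross, here at `d_2 = (k - 2)(c - 4) / (n - n_min + 2(c - 4))`,
or at the right end point `1` if the crossing lies beyond it.
-/

theorem min_le_min_of_antitone_of_monotone {f g : ℝ → ℝ} (hf : Antitone f) (hg : Monotone g)
    {x d : ℝ} (hgf : g x ≤ f x) (hfg : x < d → f x ≤ g x) :
    min (f d) (g d) ≤ min (f x) (g x) := by
  rw [min_eq_right hgf]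
  rcases le_or_gt d x with hdx | hxd
  · exact (min_le_right _ _).trans (hg hdx)
  · exact (min_le_left _ _).trans ((hf hxd.le).trans (hfg hxd))

section Crossing

variable {A C K : ℝ}

theorem div_le_sub_div_of_le_crossing (hA : 0 < A) (hC : 0 < C) {d : ℝ}
    (hd : d ≤ (K - 2) * C / (A + 2 * C)) :
    d / C ≤ (K / 2 - 1 - d) / (A / 2) := by
  rw [le_div_iff₀ (by positivity)] at hd
  rw [div_le_div_iff₀ hC (by positivity)]
  linarith

theorem sub_div_crossing_eq (hA : 0 < A) (hC : 0 < C) :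
    (K / 2 - 1 - (K - 2) * C / (A + 2 * C)) / (A / 2) = (K - 2) * C / (A + 2 * C) / C := by
  field_simp
  ring

end Crossing

theorem stmt16_general (n nmin c k : ℕ) (hk : 6 ≤ k)
    (h1 : k + 5 ≤ nmin) (h2 : nmin * k ≤ n) (h3 : 5 ≤ c)
    (p000 p100 p010 : ℝ → ℝ)
    (hp000 : ∀ d, p000 d = ((k : ℝ) / 2 - 1 - d) / (((n : ℝ) - nmin) / 2))
    (hp100 : ∀ d, p100 d = d / ((c : ℝ) - 4))
    (hp010 : ∀ d, p010 d = d)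
    (dstar : ℝ)
    (hdstar : dstar =
      min (((k : ℝ) - 2) * ((c : ℝ) - 4) / ((n : ℝ) - nmin + 2 * ((c : ℝ) - 4))) 1) :
    ∀ d ∈ Set.Icc (0 : ℝ) 1,
      min (p000 d) (min (p100 d) (p010 d))
        ≤ min (p000 dstar) (min (p100 dstar) (p010 dstar)) := by
  rintro d ⟨hd0, hd1⟩
  have hK : (6 : ℝ) ≤ k := by exact_mod_cast hk
  have hC : (1 : ℝ) ≤ (c : ℝ) - 4 := by
    have : (5 : ℝ) ≤ c := by exact_mod_cast h3
    linarith
  have hA : (0 : ℝ) < (n : ℝ) - nmin := by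
    have : nmin < n := by nlinarith
    simpa using (Nat.cast_lt (α := ℝ)).2 this
  set t := ((k : ℝ) - 2) * ((c : ℝ) - 4) / ((n : ℝ) - nmin + 2 * ((c : ℝ) - 4))
  have hdstar0 : 0 ≤ dstar := hdstar ▸ le_min
    (div_nonneg (mul_nonneg (by linarith) (by linarith)) (by linarith)) zero_le_one
  have hdstar_t : dstar ≤ t := hdstar ▸ min_le_left _ _
  have hp100_le_p010 : p100 dstar ≤ p010 dstar := by
    rw [hp100, hp010]
    exact div_le_self hdstar0 hC
  have hp000_anti : Antitone p000 := fun x y hxy => by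
    rw [hp000, hp000]; gcongr
  have hp100_mono : Monotone p100 := fun x y hxy => by
    rw [hp100, hp100]; gcongr
  rw [min_eq_left hp100_le_p010]
  refine (min_le_min_left _ (min_le_left _ _)).trans
    (min_le_min_of_antitone_of_monotone hp000_anti hp100_mono ?_ fun hlt => ?_)
  · rw [hp000, hp100]
    exact div_le_sub_div_of_le_crossing hA (by linarith) hdstar_t
  · have ht1 : t < 1 := (min_lt_iff.mp (hdstar ▸ hlt.trans_le hd1)).resolve_right (lt_irrefl 1)
    have hdt : dstar = t := hdstar ▸ min_eq_left ht1.le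
    rw [hdt, hp000, hp100]
    exact (sub_div_crossing_eq hA (by linarith)).le

/-- The maximin-optimal choice of d_2 in the Leximin manipulation
lower-bound instance is d* = min{(k−2)(c−4)/(n − n_min + 2(c−4)), 1}: it
maximizes min{p_000(d_2), p_100(d_2), p_010(d_2)} over d_2 ∈ [0,1]. -/
theorem stmt16 (n nmin c k : ℕ) (hk : 6 ≤ k) (hk2 : 2 ∣ k)
    (h1 : k + 5 ≤ nmin) (h2 : nmin * k ≤ n) (h3 : 5 ≤ c) (h4 : c ≤ nmin - k)
    (p000 p100 p010 : ℝ → ℝ)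
    (hp000 : ∀ d, p000 d = ((k : ℝ) / 2 - 1 - d) / (((n : ℝ) - nmin) / 2))
    (hp100 : ∀ d, p100 d = d / ((c : ℝ) - 4))
    (hp010 : ∀ d, p010 d = d)
    (dstar : ℝ)
    (hdstar : dstar =
      min (((k : ℝ) - 2) * ((c : ℝ) - 4) / ((n : ℝ) - nmin + 2 * ((c : ℝ) - 4))) 1) :
    ∀ d ∈ Set.Icc (0 : ℝ) 1,
      min (p000 d) (min (p100 d) (p010 d))
        ≤ min (p000 dstar) (min (p100 dstar) (p010 dstar)) :=
  stmt16_general n nmin c k hk h1 h2 h3 p000 p100 p010 hp000 hp100 hp010 dstar hdstar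
end
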